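/- arXiv:1808.00119 — 2 statements merged into one kernel-verified Lean document; each statement's English description precedes it below -/
import Mathlib

section
/- Let K be a field and let 0 → A• → B• → C• → 0 be a short exact sequence of cochain complexes of finite-dimensional K-vector spaces. Then for every integer i, the rank of the connecting homomorphism δ^i : H^i(C•) → H^{i+1}(A•) of the associated long exact cohomology sequence equals rk(d_B^i) − rk(d_A^i) − rk(d_C^i), where d_A^i, d_B^i, d_C^i denote the differentials in degree i of A•, B•, C• respectively. -/
open CategoryTheory HomologicalComplex

/-- The rank of a morphism of `K`-modules (in the category `ModuleCat K`),
i.e. the dimension of its image. -/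
noncomputable def ModuleCat.rank {K : Type*} [Field K] {M N : ModuleCat K}
    (f : M ⟶ N) : ℕ :=
  Module.finrank K (LinearMap.range f.hom)

/-!
Exactness of the long cohomology sequence at `H^{i+1}(A)` identifies the image of `δ^i` with
the kernel of `H^{i+1}(f)`, which is `{a ∈ A^{i+1} | f a ∈ im d_B} / im d_A` (such an `a` is a
cycle because `f` is injective). Since `f` is injective with image `ker g`, the numerator has
dimension `dim (im d_B ∩ ker g) = rk d_B - rk (g ∘ d_B) = rk d_B - rk (d_C ∘ g)
= rk d_B - rk d_C`, the last step because `g` is surjective in degree `i`.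
-/

open Module LinearMap

namespace Submodule

section Ring

variable {R V W : Type*} [Ring R] [AddCommGroup V] [Module R V] [AddCommGroup W] [Module R W]

theorem finrank_map_of_injective {f : V →ₗ[R] W} (hf : Function.Injective f)
    (p : Submodule R V) : finrank R (p.map f) = finrank R p :=
  (LinearEquiv.finrank_eq (p.equivMapOfInjective f hf)).symm

theorem finrank_comap_of_injective {f : V →ₗ[R] W} (hf : Function.Injective f)
    (p : Submodule R W) : finrank R (p.comap f) = finrank R ↥(p ⊓ range f) := by
  rw [← finrank_map_of_injective hf, map_comap_eq, inf_comm]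

end Ring

section DivisionRing

variable {K V W : Type*} [DivisionRing K] [AddCommGroup V] [Module K V] [AddCommGroup W]
  [Module K W]

theorem finrank_map_add_finrank_inf_ker (f : V →ₗ[K] W) (p : Submodule K V)
    [FiniteDimensional K p] : finrank K (p.map f) + finrank K ↥(p ⊓ ker f) = finrank K p := by
  have := (f.domRestrict p).finrank_range_add_finrank_ker
  rwa [range_domRestrict, ker_domRestrict, finrank_comap_of_injective p.injective_subtype,
    range_subtype, inf_comm] at this

theorem finrank_comap_of_surjective [FiniteDimensional K V] {f : V →ₗ[K] W}
    (hf : Function.Surjective f) (p : Submodule K W) :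
    finrank K (p.comap f) = finrank K p + finrank K (ker f) := by
  have := finrank_map_add_finrank_inf_ker f (p.comap f)
  rw [map_comap_eq_of_surjective hf, inf_eq_right.2 (ker_le_comap f)] at this
  exact this.symm

end DivisionRing

end Submodule

namespace HomologicalComplex

variable {ι : Type*} {c : ComplexShape ι}

section Ring

variable {R : Type*} [Ring R]

theorem moduleCat_range_iCycles (M : HomologicalComplex (ModuleCat R) c) {j k : ι}
    (hk : c.next j = k) : range (M.iCycles j).hom = ker (M.d j k).hom :=
  ((ShortComplex.mk _ _ (M.iCycles_d j k)).exact_of_f_is_kernel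
    (M.cyclesIsKernel j k hk)).moduleCat_range_eq_ker

theorem moduleCat_injective_iCycles (M : HomologicalComplex (ModuleCat R) c) (j : ι) :
    Function.Injective (M.iCycles j) :=
  (ModuleCat.mono_iff_injective _).1 inferInstance

theorem moduleCat_ker_homologyπ (M : HomologicalComplex (ModuleCat R) c) {i j : ι}
    (hi : c.prev j = i) :
    ker (M.homologyπ j).hom = (range (M.d i j).hom).comap (M.iCycles j).hom := by
  rw [← ((ShortComplex.mk _ _ (M.toCycles_comp_homologyπ i j)).exact_of_g_is_cokernel
      (M.homologyIsCokernel i j hi)).moduleCat_range_eq_ker,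
    ← M.toCycles_i, ModuleCat.hom_comp, range_comp,
    Submodule.comap_map_eq_of_injective (M.moduleCat_injective_iCycles j)]

theorem moduleCat_ker_homologyMap_comp_homologyπ {M N : HomologicalComplex (ModuleCat R) c}
    (φ : M ⟶ N) {i j : ι} (hi : c.prev j = i) :
    ker ((homologyMap φ j).hom ∘ₗ (M.homologyπ j).hom)
      = ((range (N.d i j).hom).comap (φ.f j).hom).comap (M.iCycles j).hom := by
  rw [← ModuleCat.hom_comp, homologyπ_naturality, ModuleCat.hom_comp, ker_comp,
    N.moduleCat_ker_homologyπ hi, ← Submodule.comap_comp, ← ModuleCat.hom_comp, cyclesMap_i,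
    ModuleCat.hom_comp, Submodule.comap_comp]

theorem moduleCat_range_d_le_ker_d (M : HomologicalComplex (ModuleCat R) c) (i j k : ι) :
    range (M.d i j).hom ≤ ker (M.d j k).hom := by
  rw [range_le_ker_iff, ← ModuleCat.hom_comp, M.d_comp_d, ModuleCat.hom_zero]

end Ring

variable {K : Type*} [Field K]

theorem finrank_ker_homologyMap_add_rank_d {M N : HomologicalComplex (ModuleCat K) c}
    (φ : M ⟶ N) {i j k : ι} (hi : c.prev j = i) (hk : c.next j = k)
    [FiniteDimensional K (M.X j)] :
    finrank K (ker (homologyMap φ j).hom) + ModuleCat.rank (M.d i j)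
      = finrank K ↥((range (N.d i j).hom).comap (φ.f j).hom ⊓ ker (M.d j k).hom) := by
  have hι := M.moduleCat_injective_iCycles j
  have : FiniteDimensional K (M.cycles j) := .of_injective _ hι
  have hπ : Function.Surjective (M.homologyπ j) :=
    (ModuleCat.epi_iff_surjective _).1 inferInstance
  have := Submodule.finrank_comap_of_surjective hπ (ker (homologyMap φ j).hom)
  rw [← ker_comp, moduleCat_ker_homologyMap_comp_homologyπ φ hi,
    Submodule.finrank_comap_of_injective hι, M.moduleCat_ker_homologyπ hi,
    Submodule.finrank_comap_of_injective hι, M.moduleCat_range_iCycles hk,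
    inf_eq_left.2 (M.moduleCat_range_d_le_ker_d i j k)] at this
  exact this.symm

end HomologicalComplex

namespace CategoryTheory.ShortComplex.ShortExact

variable {K : Type*} [Field K] {ι : Type*} {c : ComplexShape ι}
  {S : ShortComplex (HomologicalComplex (ModuleCat K) c)} (hS : S.ShortExact)
include hS

theorem moduleCat_injective_f_f (j : ι) : Function.Injective (S.f.f j) :=
  (hS.map_of_exact (HomologicalComplex.eval _ _ j)).moduleCat_injective_f

theorem moduleCat_surjective_g_f (i : ι) : Function.Surjective (S.g.f i) :=
  (hS.map_of_exact (HomologicalComplex.eval _ _ i)).moduleCat_surjective_g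

theorem moduleCat_range_f_f_eq_ker_g_f (j : ι) : range (S.f.f j).hom = ker (S.g.f j).hom :=
  (hS.map_of_exact (HomologicalComplex.eval _ _ j)).exact.moduleCat_range_eq_ker

theorem moduleCat_range_δ (i j : ι) (hij : c.Rel i j) :
    range (hS.δ i j hij).hom = ker (HomologicalComplex.homologyMap S.f j).hom :=
  (hS.homology_exact₁ i j hij).moduleCat_range_eq_ker

theorem comap_f_range_d_le_ker_d (i j k : ι) :
    (range (S.X₂.d i j).hom).comap (S.f.f j).hom ≤ ker (S.X₁.d j k).hom := by
  rintro a ⟨b, hb⟩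
  exact hS.d_eq_zero_of_f_eq_d_apply i j b a hb.symm k

theorem finrank_comap_f_range_d_add_rank_d (i j : ι) [FiniteDimensional K (S.X₂.X j)] :
    finrank K ((range (S.X₂.d i j).hom).comap (S.f.f j).hom) + ModuleCat.rank (S.X₃.d i j)
      = ModuleCat.rank (S.X₂.d i j) := by
  have hdC : range (S.X₃.d i j).hom = (range (S.X₂.d i j).hom).map (S.g.f j).hom := by
    rw [← range_comp, ← ModuleCat.hom_comp, ← S.g.comm, ModuleCat.hom_comp, range_comp,
      range_eq_top.2 (hS.moduleCat_surjective_g_f i), Submodule.map_top]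
  rw [Submodule.finrank_comap_of_injective (hS.moduleCat_injective_f_f j),
    hS.moduleCat_range_f_f_eq_ker_g_f, ModuleCat.rank, ModuleCat.rank, hdC, add_comm]
  exact Submodule.finrank_map_add_finrank_inf_ker _ _

theorem rank_δ_add_rank_d_add_rank_d (i j : ι) (hij : c.Rel i j)
    [FiniteDimensional K (S.X₂.X j)] :
    ModuleCat.rank (hS.δ i j hij) + ModuleCat.rank (S.X₁.d i j) + ModuleCat.rank (S.X₃.d i j)
      = ModuleCat.rank (S.X₂.d i j) := by
  have : FiniteDimensional K (S.X₁.X j) :=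
    .of_injective _ (hS.moduleCat_injective_f_f j)
  have hker := finrank_ker_homologyMap_add_rank_d S.f (c.prev_eq' hij) rfl
  rw [inf_eq_left.2 (hS.comap_f_range_d_le_ker_d i j _)] at hker
  have hcomap := hS.finrank_comap_f_range_d_add_rank_d i j
  rw [ModuleCat.rank, hS.moduleCat_range_δ]
  omega

end CategoryTheory.ShortComplex.ShortExact

theorem rank_delta_eq_general {K : Type*} [Field K]
    (S : ShortComplex (CochainComplex (ModuleCat K) ℤ))
    (hS : S.ShortExact)
    (hB : ∀ i : ℤ, FiniteDimensional K (S.X₂.X i))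
    (i : ℤ) :
    (ModuleCat.rank (hS.δ i (i + 1) rfl) : ℤ)
      = ModuleCat.rank (S.X₂.d i (i + 1))
        - ModuleCat.rank (S.X₁.d i (i + 1))
        - ModuleCat.rank (S.X₃.d i (i + 1)) := by
  have := hB (i + 1)
  have hrank := hS.rank_δ_add_rank_d_add_rank_d i (i + 1) rfl
  omega

/-- **Rank of the connecting homomorphism.**
Let `0 → A• → B• → C• → 0` be a short exact sequence of cochain complexes of
finite-dimensional `K`-vector spaces.  Then for every `i : ℤ`, the rank of the connecting
homomorphism `δ^i : H^i(C•) → H^{i+1}(A•)` of the long exact cohomology sequence equals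
`rk(d_B^i) − rk(d_A^i) − rk(d_C^i)`. -/
theorem rank_delta_eq {K : Type*} [Field K]
    (S : ShortComplex (CochainComplex (ModuleCat K) ℤ))
    (hS : S.ShortExact)
    (hA : ∀ i : ℤ, FiniteDimensional K (S.X₁.X i))
    (hB : ∀ i : ℤ, FiniteDimensional K (S.X₂.X i))
    (hC : ∀ i : ℤ, FiniteDimensional K (S.X₃.X i))
    (i : ℤ) :
    (ModuleCat.rank (hS.δ i (i + 1) rfl) : ℤ)
      = ModuleCat.rank (S.X₂.d i (i + 1))
        - ModuleCat.rank (S.X₁.d i (i + 1))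
        - ModuleCat.rank (S.X₃.d i (i + 1)) :=
  rank_delta_eq_general S hS hB i
end

section
/- Let K be a field and let f : A• → B• be a morphism of cochain complexes of finite-dimensional K-vector spaces. Then for every integer i, the rank of the induced map H^i(f) : H^i(A•) → H^i(B•) equals the rank of the linear map A^i ⊕ B^{i−1} → A^{i+1} ⊕ B^i given by (a, b) ↦ (d_A^i(a), f^i(a) + d_B^{i−1}(b)), minus the rank of d_A^i, minus the rank of d_B^{i−1}. -/
/-!
Write `Z = ker d_A^i` and `Bd = im d_B^{i-1}`. Composing `H^i(f)` with the epimorphism from the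
cycles and the monomorphism into the opcycles `B^i / Bd` leaves `Z → B^i → B^i / Bd`, so the image
of `H^i(f)` is `(f(Z) + Bd) / Bd` and `rank H^i(f) = dim (f(Z) + Bd) - dim Bd`. On the other side,
the block map `(a, b) ↦ (d_A a, f a + d_B b)` has rank `rank d_A + dim (f(Z) + Bd)`: its second
component carries the kernel `Z × B^{i-1}` of the first one onto `f(Z) + Bd`.
-/

open CategoryTheory HomologicalComplex

open Module

section LinearAlgebra

variable {K M N P : Type*} [Field K] [AddCommGroup M] [Module K M] [AddCommGroup N] [Module K N]
  [AddCommGroup P] [Module K P]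

theorem Submodule.finrank_map_add_finrank_inf_ker_s1 (f : M →ₗ[K] N) (W : Submodule K M)
    [FiniteDimensional K W] :
    finrank K (W.map f) + finrank K ↥(W ⊓ LinearMap.ker f) = finrank K W := by
  have h := (f.domRestrict W).finrank_range_add_finrank_ker
  rwa [LinearMap.range_domRestrict, LinearMap.ker_domRestrict,
    ← Submodule.finrank_map_subtype_eq, Submodule.map_comap_subtype] at h

theorem Submodule.finrank_map_add_finrank_ker [FiniteDimensional K M] (f : M →ₗ[K] N)
    (W : Submodule K M) :
    finrank K (W.map f) + finrank K (LinearMap.ker f) = finrank K ↥(W ⊔ LinearMap.ker f) := by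
  have h := (W ⊔ LinearMap.ker f).finrank_map_add_finrank_inf_ker_s1 f
  rwa [Submodule.map_sup, LinearMap.le_ker_iff_map.1 le_rfl, sup_bot_eq,
    inf_eq_right.2 le_sup_right] at h

theorem LinearMap.finrank_range_prod [FiniteDimensional K M] (g : M →ₗ[K] N) (h : M →ₗ[K] P) :
    finrank K (range (g.prod h)) = finrank K (range g) + finrank K ((ker g).map h) := by
  have hgh := (g.prod h).finrank_range_add_finrank_ker
  have hg := g.finrank_range_add_finrank_ker
  have hker := (ker g).finrank_map_add_finrank_inf_ker_s1 h
  rw [ker_prod] at hgh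
  omega

theorem LinearMap.finrank_range_comp_fst_prod_coprod {Q : Type*} [AddCommGroup Q] [Module K Q]
    [FiniteDimensional K M] [FiniteDimensional K Q] (d : M →ₗ[K] N) (f : M →ₗ[K] P)
    (e : Q →ₗ[K] P) :
    finrank K (range ((d ∘ₗ fst K M Q).prod (f.coprod e)))
      = finrank K (range d) + finrank K ↥((ker d).map f ⊔ range e) := by
  rw [finrank_range_prod, range_comp, Submodule.range_fst, Submodule.map_top, ker_comp,
    Submodule.comap_fst, map_coprod_prod, Submodule.map_top]

end LinearAlgebra

namespace ModuleCat

variable {K : Type*} [Field K]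

theorem rank_comp_mono {L M N : ModuleCat K} (g : L ⟶ M) (m : M ⟶ N) [Mono m] :
    ModuleCat.rank (g ≫ m) = ModuleCat.rank g := by
  have hm : Function.Injective m.hom := (mono_iff_injective m).1 inferInstance
  rw [ModuleCat.rank, ModuleCat.rank, hom_comp, LinearMap.range_comp]
  exact (LinearEquiv.finrank_eq (Submodule.equivMapOfInjective _ hm _)).symm

theorem rank_epi_comp {L M N : ModuleCat K} (e : L ⟶ M) (g : M ⟶ N) [Epi e] :
    ModuleCat.rank (e ≫ g) = ModuleCat.rank g := by
  have he : Function.Surjective e.hom := (epi_iff_surjective e).1 inferInstance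
  rw [ModuleCat.rank, ModuleCat.rank, hom_comp,
    LinearMap.range_comp_of_range_eq_top _ (LinearMap.range_eq_top.2 he)]

end ModuleCat

namespace CategoryTheory.ShortComplex

variable {K : Type*} [Field K]

theorem moduleCat_range_iCycles (S : ShortComplex (ModuleCat K)) :
    LinearMap.range S.iCycles.hom = LinearMap.ker S.g.hom := by
  rw [← S.moduleCatCyclesIso_hom_i, ModuleCat.hom_comp,
    LinearMap.range_comp_of_range_eq_top _
      (LinearMap.range_eq_top.2 ((ModuleCat.epi_iff_surjective _).1 inferInstance))]
  exact Submodule.range_subtype _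

theorem moduleCat_ker_pOpcycles (S : ShortComplex (ModuleCat K)) :
    LinearMap.ker S.pOpcycles.hom = LinearMap.range S.f.hom := by
  ext x
  exact S.moduleCat_pOpcycles_eq_zero_iff x

theorem rank_homologyMap_add_finrank_range {S₁ S₂ : ShortComplex (ModuleCat K)} (φ : S₁ ⟶ S₂)
    [FiniteDimensional K S₂.X₂] :
    ModuleCat.rank (homologyMap φ) + finrank K (LinearMap.range S₂.f.hom)
      = finrank K ↥((LinearMap.ker S₁.g.hom).map φ.τ₂.hom ⊔ LinearMap.range S₂.f.hom) := by
  have hfactor : S₁.homologyπ ≫ homologyMap φ ≫ S₂.homologyι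
      = S₁.iCycles ≫ φ.τ₂ ≫ S₂.pOpcycles := by
    simp
  have hrank : ModuleCat.rank (homologyMap φ)
      = finrank K ((LinearMap.ker S₁.g.hom).map φ.τ₂.hom |>.map S₂.pOpcycles.hom) := by
    rw [← ModuleCat.rank_comp_mono _ S₂.homologyι, ← ModuleCat.rank_epi_comp S₁.homologyπ,
      hfactor, ModuleCat.rank, ModuleCat.hom_comp, ModuleCat.hom_comp, LinearMap.range_comp,
      Submodule.map_comp, moduleCat_range_iCycles]
  rw [hrank, ← moduleCat_ker_pOpcycles]
  exact Submodule.finrank_map_add_finrank_ker _ _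

end CategoryTheory.ShortComplex

theorem HomologicalComplex.rank_homologyMap_add_rank_d {K ι : Type*} [Field K]
    {c : ComplexShape ι} {A B : HomologicalComplex (ModuleCat K) c} (f : A ⟶ B) (i : ι)
    [FiniteDimensional K (B.X i)] :
    ModuleCat.rank (homologyMap f i) + ModuleCat.rank (B.d (c.prev i) i)
      = finrank K ↥((LinearMap.ker (A.d i (c.next i)).hom).map (f.f i).hom
          ⊔ LinearMap.range (B.d (c.prev i) i).hom) := by
  have : FiniteDimensional K (B.sc i).X₂ := ‹_›
  exact ShortComplex.rank_homologyMap_add_finrank_range ((shortComplexFunctor _ c i).map f)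

/-- **Rank of the map induced on cohomology.**
Let `f : A• → B•` be a morphism of cochain complexes of finite-dimensional `K`-vector
spaces.  Then for every `i : ℤ`, the rank of the induced map
`H^i(f) : H^i(A•) → H^i(B•)` equals the rank of the map
`A^i ⊕ B^{i−1} → A^{i+1} ⊕ B^i`, `(a, b) ↦ (d_A^i a, f^i a + d_B^{i−1} b)`,
minus the rank of `d_A^i`, minus the rank of `d_B^{i−1}`. -/
theorem rank_homologyMap_eq {K : Type*} [Field K]
    (A B : CochainComplex (ModuleCat K) ℤ)
    (hA : ∀ i : ℤ, FiniteDimensional K (A.X i))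
    (hB : ∀ i : ℤ, FiniteDimensional K (B.X i))
    (f : A ⟶ B) (i : ℤ) :
    (ModuleCat.rank (homologyMap f i) : ℤ)
      = Module.finrank K (LinearMap.range
          (LinearMap.prod
            ((A.d i (i + 1)).hom.comp (LinearMap.fst K (A.X i) (B.X (i - 1))))
            (((f.f i).hom.comp (LinearMap.fst K (A.X i) (B.X (i - 1))))
              + ((B.d (i - 1) i).hom.comp (LinearMap.snd K (A.X i) (B.X (i - 1)))))))
        - ModuleCat.rank (A.d i (i + 1))
        - ModuleCat.rank (B.d (i - 1) i) := by
  have := hA i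
  have := hB i
  have := hB (i - 1)
  have hprod := LinearMap.finrank_range_comp_fst_prod_coprod
    (A.d i (i + 1)).hom (f.f i).hom (B.d (i - 1) i).hom
  have hH := HomologicalComplex.rank_homologyMap_add_rank_d f i
  rw [CochainComplex.prev, CochainComplex.next] at hH
  rw [LinearMap.coprod] at hprod
  rw [hprod, ← hH]
  unfold ModuleCat.rank
  push_cast
  ring
end
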